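/- arXiv:2303.06629 — 3 statements merged into one kernel-verified Lean document; each statement's English description precedes it below -/
import Mathlib

section
/- In a partial groupoid satisfying Idempotence, symmetry of the domain ((x,y)∈D iff (y,x)∈D), and Catenary associativity, an element m is maximal with respect to ≤_r if and only if m is maximal with respect to ≤, where p ≤_r q iff p∘q = q and p ≤ q iff p∘q = q∘p = q, and m is maximal with respect to a relation ⊑ if m ⊑ n implies n ⊑ m. -/
/-- Under Idempotence, symmetric domain, and Catenary associativity,
    m is maximal w.r.t. ≤_r iff m is maximal w.r.t. ≤. -/
theorem stmt_7 {P : Type*} [Nonempty P] (op : P → P → Option P)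
    (hidem : ∀ p, op p p = some p)
    (hsym : ∀ x y, (op x y).isSome ↔ (op y x).isSome)
    (hCA : ∀ p1 p2 p3 a b, op p1 p2 = some a → op p2 p3 = some b →
        ∃ c, op p1 b = some c ∧ op a p3 = some c) :
    let ler : P → P → Prop := fun p q => op p q = some q
    let le : P → P → Prop := fun p q => op p q = some q ∧ op q p = some q
    ∀ m : P, (∀ n, ler m n → ler n m) ↔ (∀ n, le m n → le n m) := by
  intro ler le m
  constructor
  · intro h n hmn
    obtain ⟨h1, h2⟩ := hmn
    have h3 : op n m = some m := h n h1
    have : n = m := by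
      have := h2.symm.trans h3
      exact Option.some_injective _ this
    subst this
    exact ⟨hidem _, hidem _⟩
  · intro h n hmn
    -- hmn : op m n = some n
    have hdef : (op n m).isSome := (hsym m n).mp (Option.isSome_iff_exists.mpr ⟨n, hmn⟩)
    obtain ⟨a, ha⟩ := Option.isSome_iff_exists.mp hdef
    -- op n m = some a
    -- CA n m m : op n m = a, op m m = m ⇒ ∃c, op n m = c ∧ op a m = c
    obtain ⟨c, hc1, hc2⟩ := hCA n m m a m ha (hidem m)
    have hca : c = a := Option.some_injective _ (hc1.symm.trans ha)
    rw [hca] at hc2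
    -- op a m = some a (hc2)
    -- CA m n m : op m n = n, op n m = a ⇒ ∃c, op m a = c ∧ op n m = c
    obtain ⟨d, hd1, hd2⟩ := hCA m n m n a hmn ha
    have hda : d = a := Option.some_injective _ (hd2.symm.trans ha)
    rw [hda] at hd1
    -- le m a
    have := h a ⟨hd1, hc2⟩
    have ham : a = m := Option.some_injective _ (hc2.symm.trans this.1)
    subst ham
    exact ha
end

section
/- Let (P,D,∘) be a partial groupoid with reflexive domain D and let ⪯ be a partial order on P such that (i) for all (p1,p2)∈D, p1∘p2 is the least upper bound of p1 and p2 with respect to ⪯, and (ii) ⪯ is both left and right compatible with domain and composition. Then (P,D,∘) satisfies Idempotence, Commutativity, Associativity, and Representativity, and moreover p1 ⪯ p2 holds if and only if p1∘p2 = p2∘p1 = p2. -/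
/-- If D is reflexive and a partial order ⪯ satisfies LU_pg and CP_pg, then the
    partial groupoid satisfies Idempotence, Commutativity, Associativity, and
    Representativity, and ⪯ coincides with the natural order ≤. -/
theorem stmt_10 {P : Type*} [Nonempty P] (op : P → P → Option P)
    (pre : P → P → Prop)
    -- ⪯ is a partial order:
    (hrefl : ∀ p, pre p p)
    (hantisymm : ∀ p q, pre p q → pre q p → p = q)
    (htrans : ∀ p q r, pre p q → pre q r → pre p r)
    -- D is reflexive:
    (hDrefl : ∀ p, (op p p).isSome)
    -- (LU_pg): compositions give least upper bounds w.r.t. ⪯: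
    (hlub : ∀ p1 p2 m, op p1 p2 = some m →
      pre p1 m ∧ pre p2 m ∧ ∀ x, pre p1 x → pre p2 x → pre m x)
    -- (lCP_pg): left compatibility:
    (hlcp : ∀ p p1 p2 a, pre p1 p2 → op p p1 = some a →
      ∃ b, op p p2 = some b ∧ pre a b)
    -- (rCP_pg): right compatibility:
    (hrcp : ∀ p p1 p2 a, pre p1 p2 → op p1 p = some a →
      ∃ b, op p2 p = some b ∧ pre a b) :
    -- Idempotence:
    (∀ p, op p p = some p) ∧
    -- Commutativity:
    (∀ p1 p2 a b, op p1 p2 = some a → op p2 p1 = some b → a = b) ∧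
    -- Associativity:
    (∀ p1 p2 p3 a b c d, op p1 p2 = some a → op p2 p3 = some b →
        op a p3 = some c → op p1 b = some d → c = d) ∧
    -- Representativity:
    (∀ p p1 p2 a, op p1 p2 = some a → (op p p1).isSome → (op p a).isSome) ∧
    (∀ p p1 p2 a, op p1 p2 = some a → (op p2 p).isSome → (op a p).isSome) ∧
    -- ⪯ is the natural order ≤:
    (∀ p1 p2, pre p1 p2 ↔ (op p1 p2 = some p2 ∧ op p2 p1 = some p2)) := by

  have hid : ∀ p, op p p = some p := by
    intro p
    obtain ⟨m, hm⟩ := Option.isSome_iff_exists.mp (hDrefl p)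
    obtain ⟨h1, h2, h3⟩ := hlub p p m hm
    have := hantisymm m p (h3 p (hrefl p) (hrefl p)) h1
    rw [hm, this]
  refine ⟨hid, ?_, ?_, ?_, ?_, ?_⟩
  · intro p1 p2 a b ha hb
    obtain ⟨a1, a2, a3⟩ := hlub p1 p2 a ha
    obtain ⟨b1, b2, b3⟩ := hlub p2 p1 b hb
    exact hantisymm a b (a3 b b2 b1) (b3 a a2 a1)
  · intro p1 p2 p3 a b c d ha hb hc hd
    obtain ⟨ha1, ha2, ha3⟩ := hlub p1 p2 a ha
    obtain ⟨hb1, hb2, hb3⟩ := hlub p2 p3 b hb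
    obtain ⟨hc1, hc2, hc3⟩ := hlub a p3 c hc
    obtain ⟨hd1, hd2, hd3⟩ := hlub p1 b d hd
    have hcd : pre c d :=
      hc3 d (ha3 d hd1 (htrans _ _ _ hb1 hd2)) (htrans _ _ _ hb2 hd2)
    have hdc : pre d c :=
      hd3 c (htrans _ _ _ ha1 hc1) (hb3 c (htrans _ _ _ ha2 hc1) hc2)
    exact hantisymm c d hcd hdc
  · intro p p1 p2 a ha hs
    obtain ⟨e, he⟩ := Option.isSome_iff_exists.mp hs
    obtain ⟨b, hb, _⟩ := hlcp p p1 a e (hlub p1 p2 a ha).1 he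
    exact Option.isSome_iff_exists.mpr ⟨b, hb⟩
  · intro p p1 p2 a ha hs
    obtain ⟨e, he⟩ := Option.isSome_iff_exists.mp hs
    obtain ⟨b, hb, _⟩ := hrcp p p2 a e (hlub p1 p2 a ha).2.1 he
    exact Option.isSome_iff_exists.mpr ⟨b, hb⟩
  · intro p1 p2
    constructor
    · intro h
      constructor
      · obtain ⟨b, hb, _⟩ := hlcp p1 p1 p2 p1 h (hid p1)
        obtain ⟨b1, b2, b3⟩ := hlub p1 p2 b hb
        have := hantisymm b p2 (b3 p2 h (hrefl p2)) b2
        rw [hb, this]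
      · obtain ⟨b, hb, _⟩ := hrcp p1 p1 p2 p1 h (hid p1)
        obtain ⟨b1, b2, b3⟩ := hlub p2 p1 b hb
        have := hantisymm b p2 (b3 p2 (hrefl p2) h) b1
        rw [hb, this]
    · intro ⟨h1, _⟩
      exact (hlub p1 p2 p2 h1).1
end

section
/- In a partial groupoid (P,D,∘) satisfying NR, the relation ∼_c is a congruence: if p ∼_c p' and q ∼_c q' and p∘q is defined, then p'∘q' is defined (given symmetric domain and representativity for definedness) and p∘q ∼_c p'∘q'. -/
/-- A value of the product of a sequence of elements of a partial groupoid,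
    under some binary bracketing. -/
inductive IsProd {P : Type*} (op : P → P → Option P) : List P → P → Prop
  | single (x : P) : IsProd op [x] x
  | comp {l1 l2 : List P} {a b c : P} :
      IsProd op l1 a → IsProd op l2 b → op a b = some c → IsProd op (l1 ++ l2) c

/-- Property (NR_pg): if the product of a nonempty sequence is defined (under
    some bracketing) with value r, then the product of the doubled sequence is
    defined and equals r. -/
def NR {P : Type*} (op : P → P → Option P) : Prop :=
  ∀ (l : List P) (r : P), l ≠ [] → IsProd op l r →
    IsProd op (l ++ l) r ∧ ∀ s, IsProd op (l ++ l) s → s = r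

/-- The relation ∼_c : p ∼_c q iff pqp = p and qpq = q (products defined). -/
def SimC {P : Type*} (op : P → P → Option P) (x y : P) : Prop :=
  IsProd op [x, y, x] x ∧ IsProd op [y, x, y] y

section Aux
variable {P : Type*} {op : P → P → Option P}

theorem myIsProd_ne_nil {l : List P} {r : P} (h : IsProd op l r) : l ≠ [] := by
  induction h with
  | single x => simp
  | comp h1 h2 hop ih1 ih2 =>
      intro hc
      exact ih1 (List.append_eq_nil_iff.mp hc).1

theorem myIsProd_single {x r : P} (h : IsProd op [x] r) : r = x := by
  suffices H : ∀ l r, IsProd op l r → l = [x] → r = x from H _ _ h rfl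
  intro l r h
  cases h with
  | single y => intro he; cases he; rfl
  | comp h1 h2 hop =>
      intro he
      exfalso
      obtain ⟨z, l1', rfl⟩ := List.exists_cons_of_ne_nil (myIsProd_ne_nil h1)
      simp only [List.cons_append, List.cons.injEq] at he
      exact myIsProd_ne_nil h2 (List.append_eq_nil_iff.mp he.2).2

theorem myIsProd_pair {x y r : P} (h : IsProd op [x, y] r) : op x y = some r := by
  suffices H : ∀ l r, IsProd op l r → l = [x, y] → op x y = some r from H _ _ h rfl
  intro l r h
  cases h with
  | single z => intro he; exact absurd he (by simp)
  | comp h1 h2 hop =>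
      intro he
      obtain ⟨z1, l1', rfl⟩ := List.exists_cons_of_ne_nil (myIsProd_ne_nil h1)
      rcases l1' with _ | ⟨z2, l1''⟩
      · simp only [List.cons_append, List.nil_append, List.cons.injEq] at he
        obtain ⟨rfl, hl2⟩ := he
        subst hl2
        obtain rfl := myIsProd_single h1
        obtain rfl := myIsProd_single h2
        exact hop
      · simp only [List.cons_append, List.cons.injEq] at he
        obtain ⟨rfl, rfl, hnil⟩ := he
        exact absurd (List.append_eq_nil_iff.mp hnil).2 (myIsProd_ne_nil h2)

theorem myIsProd_triple {x y z r : P} (h : IsProd op [x, y, z] r) :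
    (∃ u, op x y = some u ∧ op u z = some r) ∨
    (∃ u, op y z = some u ∧ op x u = some r) := by
  suffices H : ∀ l r, IsProd op l r → l = [x, y, z] →
      (∃ u, op x y = some u ∧ op u z = some r) ∨
      (∃ u, op y z = some u ∧ op x u = some r) from H _ _ h rfl
  intro l r h
  cases h with
  | single w => intro he; exact absurd he (by simp)
  | comp h1 h2 hop =>
      intro he
      obtain ⟨z1, l1', rfl⟩ := List.exists_cons_of_ne_nil (myIsProd_ne_nil h1)
      rcases l1' with _ | ⟨z2, l1''⟩
      · simp only [List.cons_append, List.nil_append, List.cons.injEq] at he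
        obtain ⟨rfl, hl2⟩ := he
        subst hl2
        obtain rfl := myIsProd_single h1
        exact Or.inr ⟨_, myIsProd_pair h2, hop⟩
      · rcases l1'' with _ | ⟨z3, l1'''⟩
        · simp only [List.cons_append, List.nil_append, List.cons.injEq] at he
          obtain ⟨rfl, rfl, hl2⟩ := he
          subst hl2
          obtain rfl := myIsProd_single h2
          exact Or.inl ⟨_, myIsProd_pair h1, hop⟩
        · simp only [List.cons_append, List.cons.injEq] at he
          obtain ⟨rfl, rfl, rfl, hnil⟩ := he
          exact absurd (List.append_eq_nil_iff.mp hnil).2 (myIsProd_ne_nil h2)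

theorem myOpSelf (hNR : NR op) (x : P) : op x x = some x := by
  have h := (hNR [x] x (by simp) (IsProd.single x)).1
  exact myIsProd_pair h

theorem myUniq (hNR : NR op) {l : List P} {x y : P}
    (hx : IsProd op l x) (hy : IsProd op l y) : y = x :=
  (hNR l x (myIsProd_ne_nil hx) hx).2 y (IsProd.comp hy hy (myOpSelf hNR y))

theorem myHeadDef (hRl : ∀ p p1 p2 a, op p1 p2 = some a → (op p p1).isSome → (op p a).isSome)
    {m : List P} {y : P} (h : IsProd op m y) (x : P)
    (hd : ∀ w ∈ m, (op x w).isSome) : (op x y).isSome := by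
  induction h with
  | single w => exact hd w (by simp)
  | comp h1 h2 hop ih1 ih2 =>
      exact hRl x _ _ _ hop (ih1 fun w hw => hd w (List.mem_append_left _ hw))

theorem myTailDef (hRr : ∀ p p1 p2 a, op p1 p2 = some a → (op p2 p).isSome → (op a p).isSome)
    {m : List P} {y : P} (h : IsProd op m y) (x : P)
    (hd : ∀ w ∈ m, (op w x).isSome) : (op y x).isSome := by
  induction h with
  | single w => exact hd w (by simp)
  | comp h1 h2 hop ih1 ih2 =>
      exact hRr x _ _ _ hop (ih2 fun w hw => hd w (List.mem_append_right _ hw))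

theorem myProdDef (hRl : ∀ p p1 p2 a, op p1 p2 = some a → (op p p1).isSome → (op p a).isSome)
    (hRr : ∀ p p1 p2 a, op p1 p2 = some a → (op p2 p).isSome → (op a p).isSome)
    {l m : List P} {x y : P} (hx : IsProd op l x) (hy : IsProd op m y)
    (hd : ∀ z ∈ l, ∀ w ∈ m, (op z w).isSome) : (op x y).isSome :=
  myHeadDef hRl hy x fun w hw => myTailDef hRr hx w fun z hz => hd z hz w hw

/-- Definedness transfer along ∼. -/
theorem myTransfer (hsym : ∀ x y, (op x y).isSome ↔ (op y x).isSome)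
    (hRl : ∀ p p1 p2 a, op p1 p2 = some a → (op p p1).isSome → (op p a).isSome)
    (hRr : ∀ p p1 p2 a, op p1 p2 = some a → (op p2 p).isSome → (op a p).isSome)
    {x y y' : P} (hxy : (op x y).isSome) (hsim : IsProd op [y', y, y'] y') :
    (op x y').isSome := by
  rcases myIsProd_triple hsim with ⟨k, hk1, hk2⟩ | ⟨k, hk1, hk2⟩
  · have h1 : (op y x).isSome := (hsym x y).mp hxy
    have h2 : (op k x).isSome := hRr x y' y k hk1 h1
    have h3 : (op x k).isSome := (hsym k x).mp h2
    exact hRl x k y' y' hk2 h3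
  · have h1 : (op x k).isSome := hRl x y y' k hk1 hxy
    have h2 : (op k x).isSome := (hsym x k).mp h1
    have h3 : (op y' x).isSome := hRr x y' k y' hk2 h2
    exact (hsym y' x).mp h3

theorem myFactF {B : Type*} [Semigroup B] (idem : ∀ x : B, x * x = x) (s y t : B) :
    (s * y * t) * y * (s * y * t) = s * y * t := by
  calc (s * y * t) * y * (s * y * t)
      = s * (y * (t * (y * (s * (y * t))))) := by simp only [mul_assoc]
    _ = s * (y * (t * (y * (s * ((y * t) * (y * t)))))) := by rw [idem]
    _ = (s * (y * (t * y))) * ((s * (y * (t * y))) * t) := by simp only [mul_assoc]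
    _ = ((s * (y * (t * y))) * (s * (y * (t * y)))) * t := by rw [← mul_assoc]
    _ = (s * (y * (t * y))) * t := by rw [idem]
    _ = s * ((y * t) * (y * t)) := by simp only [mul_assoc]
    _ = s * (y * t) := by rw [idem]
    _ = s * y * t := by rw [mul_assoc]

theorem myBandKey {B : Type*} [Semigroup B] (idem : ∀ x : B, x * x = x) (p q p' q' : B)
    (hp : p * p' * p = p) (hq : q * q' * q = q) :
    (p * q) * (p' * q') * (p * q) = p * q := by
  have hp2 : ∀ z : B, p * (p' * (p * z)) = p * z := fun z => by
    rw [← mul_assoc, ← mul_assoc, hp]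
  have hq2 : ∀ z : B, q * (q' * (q * z)) = q * z := fun z => by
    rw [← mul_assoc, ← mul_assoc, hq]
  have key : p * q = (p * q) * (q' * (q * (p * p'))) * (p * q) := by
    have h1 : (p * q) * (q' * (q * (p * p'))) * (p * q)
        = p * (q * (q' * (q * (p * (p' * (p * q)))))) := by
      simp only [mul_assoc]
    rw [h1, hp2, hq2, ← mul_assoc, idem]
  have hsyt : (p * q) * (q' * (q * (p * p'))) * (p * q) =
      ((p * q) * (q' * (q * p))) * (p' * q') * ((q * (p * p')) * (p * q)) := by
    rw [show (p * q) * (q' * (q * (p * p'))) * (p * q)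
        = (p * q) * ((q' * (q * (p * p'))) * (q' * (q * (p * p')))) * (p * q) by rw [idem]]
    simp only [mul_assoc]
  have ha : p * q = ((p * q) * (q' * (q * p))) * (p' * q') * ((q * (p * p')) * (p * q)) :=
    key.trans hsyt
  have hf := myFactF idem ((p * q) * (q' * (q * p))) (p' * q') ((q * (p * p')) * (p * q))
  rw [← ha] at hf
  exact hf

theorem myMain (hNR : NR op)
    (hRl : ∀ p p1 p2 a, op p1 p2 = some a → (op p p1).isSome → (op p a).isSome)
    (hRr : ∀ p p1 p2 a, op p1 p2 = some a → (op p2 p).isSome → (op a p).isSome)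
    (S : P → Prop) (hS : ∀ x, S x → ∀ y, S y → (op x y).isSome)
    {p q p' q' : P} (hpS : S p) (hqS : S q) (hp'S : S p') (hq'S : S q')
    (hp3 : IsProd op [p, p', p] p) (hq3 : IsProd op [q, q', q] q)
    {a b : P} (ha : op p q = some a) (hb : op p' q' = some b) :
    ∃ c, op a b = some c ∧ op c a = some a := by
  have hclose : ∀ x y : {x : P // ∃ l, (∀ z ∈ l, S z) ∧ IsProd op l x},
      (op x.1 y.1).isSome := by
    rintro ⟨x, lx, hlxS, hlx⟩ ⟨y, ly, hlyS, hly⟩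
    exact myProdDef hRl hRr hlx hly fun z hz w hw => hS z (hlxS z hz) w (hlyS w hw)
  letI instMul : Mul {x : P // ∃ l, (∀ z ∈ l, S z) ∧ IsProd op l x} :=
    ⟨fun x y => ⟨(op x.1 y.1).get (hclose x y), by
      obtain ⟨lx, hlxS, hlx⟩ := x.2
      obtain ⟨ly, hlyS, hly⟩ := y.2
      refine ⟨lx ++ ly, ?_, IsProd.comp hlx hly (Option.some_get (hclose x y)).symm⟩
      intro z hz
      rcases List.mem_append.mp hz with h | h
      exacts [hlxS z h, hlyS z h]⟩⟩
  have mulspec : ∀ x y : {x : P // ∃ l, (∀ z ∈ l, S z) ∧ IsProd op l x},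
      op x.1 y.1 = some (x * y).1 :=
    fun x y => (Option.some_get (hclose x y)).symm
  have prodmul : ∀ (x y : {x : P // ∃ l, (∀ z ∈ l, S z) ∧ IsProd op l x}) (lx ly : List P),
      IsProd op lx x.1 → IsProd op ly y.1 → IsProd op (lx ++ ly) (x * y).1 :=
    fun x y lx ly h1 h2 => IsProd.comp h1 h2 (mulspec x y)
  have hassoc : ∀ x y z : {x : P // ∃ l, (∀ z ∈ l, S z) ∧ IsProd op l x},
      x * y * z = x * (y * z) := by
    intro x y z
    obtain ⟨lx, hlxS, hlx⟩ := x.2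
    obtain ⟨ly, hlyS, hly⟩ := y.2
    obtain ⟨lz, hlzS, hlz⟩ := z.2
    apply Subtype.ext
    have h1 : IsProd op ((lx ++ ly) ++ lz) ((x * y) * z).1 :=
      prodmul _ _ _ _ (prodmul x y _ _ hlx hly) hlz
    have h2 : IsProd op (lx ++ (ly ++ lz)) (x * (y * z)).1 :=
      prodmul _ _ _ _ hlx (prodmul y z _ _ hly hlz)
    rw [← List.append_assoc] at h2
    exact (myUniq hNR h1 h2).symm
  letI instSG : Semigroup {x : P // ∃ l, (∀ z ∈ l, S z) ∧ IsProd op l x} :=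
    { toMul := instMul, mul_assoc := hassoc }
  have idem : ∀ x : {x : P // ∃ l, (∀ z ∈ l, S z) ∧ IsProd op l x}, x * x = x := by
    intro x
    apply Subtype.ext
    have h1 := mulspec x x
    rw [myOpSelf hNR x.1] at h1
    exact (Option.some_inj.mp h1).symm
  let pe : {x : P // ∃ l, (∀ z ∈ l, S z) ∧ IsProd op l x} :=
    ⟨p, [p], by simpa using hpS, IsProd.single p⟩
  let qe : {x : P // ∃ l, (∀ z ∈ l, S z) ∧ IsProd op l x} :=
    ⟨q, [q], by simpa using hqS, IsProd.single q⟩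
  let p'e : {x : P // ∃ l, (∀ z ∈ l, S z) ∧ IsProd op l x} :=
    ⟨p', [p'], by simpa using hp'S, IsProd.single p'⟩
  let q'e : {x : P // ∃ l, (∀ z ∈ l, S z) ∧ IsProd op l x} :=
    ⟨q', [q'], by simpa using hq'S, IsProd.single q'⟩
  have hpb : pe * p'e * pe = pe := by
    apply Subtype.ext
    have h1 : IsProd op (([p] ++ [p']) ++ [p]) ((pe * p'e * pe)).1 :=
      prodmul _ _ _ _ (prodmul pe p'e _ _ (IsProd.single p) (IsProd.single p'))
        (IsProd.single p)
    exact myUniq hNR hp3 h1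
  have hqb : qe * q'e * qe = qe := by
    apply Subtype.ext
    have h1 : IsProd op (([q] ++ [q']) ++ [q]) ((qe * q'e * qe)).1 :=
      prodmul _ _ _ _ (prodmul qe q'e _ _ (IsProd.single q) (IsProd.single q'))
        (IsProd.single q)
    exact myUniq hNR hq3 h1
  have key := myBandKey idem pe qe p'e q'e hpb hqb
  have hae : (pe * qe).1 = a := Option.some_inj.mp ((mulspec pe qe).symm.trans ha)
  have hbe : (p'e * q'e).1 = b := Option.some_inj.mp ((mulspec p'e q'e).symm.trans hb)
  refine ⟨((pe * qe) * (p'e * q'e)).1, ?_, ?_⟩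
  · have h1 := mulspec (pe * qe) (p'e * q'e)
    rw [hae, hbe] at h1
    exact h1
  · have h1 := mulspec ((pe * qe) * (p'e * q'e)) (pe * qe)
    rw [key] at h1
    rw [hae] at h1
    exact h1

end Aux

/-- Under NR, with symmetric domain and Representativity, ∼_c is a congruence. -/
theorem stmt_15 {P : Type*} [Nonempty P] (op : P → P → Option P) (hNR : NR op)
    (hsym : ∀ x y, (op x y).isSome ↔ (op y x).isSome)
    (hRl : ∀ p p1 p2 a, op p1 p2 = some a → (op p p1).isSome → (op p a).isSome)
    (hRr : ∀ p p1 p2 a, op p1 p2 = some a → (op p2 p).isSome → (op a p).isSome) :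
    ∀ p p' q q' a, SimC op p p' → SimC op q q' → op p q = some a →
      ∃ b, op p' q' = some b ∧ SimC op a b := by
  intro p p' q q' a hsp hsq hpq
  have dself : ∀ x, (op x x).isSome := fun x => by rw [myOpSelf hNR]; rfl
  have dpq : (op p q).isSome := by rw [hpq]; rfl
  have dpp' : (op p p').isSome := by
    rcases myIsProd_triple hsp.1 with ⟨u, h1, -⟩ | ⟨u, h1, -⟩
    · rw [h1]; rfl
    · exact (hsym p' p).mp (by rw [h1]; rfl)
  have dqq' : (op q q').isSome := by
    rcases myIsProd_triple hsq.1 with ⟨u, h1, -⟩ | ⟨u, h1, -⟩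
    · rw [h1]; rfl
    · exact (hsym q' q).mp (by rw [h1]; rfl)
  have dpq' : (op p q').isSome := myTransfer hsym hRl hRr dpq hsq.2
  have dqp : (op q p).isSome := (hsym p q).mp dpq
  have dp'q : (op p' q).isSome :=
    (hsym q p').mp (myTransfer hsym hRl hRr dqp hsp.2)
  have dp'q' : (op p' q').isSome := myTransfer hsym hRl hRr dp'q hsq.2
  have hS : ∀ x, (x = p ∨ x = q ∨ x = p' ∨ x = q') →
      ∀ y, (y = p ∨ y = q ∨ y = p' ∨ y = q') → (op x y).isSome := by
    intro x hx y hy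
    rcases hx with rfl | rfl | rfl | rfl <;> rcases hy with rfl | rfl | rfl | rfl <;>
      first
        | exact dself _
        | exact dpq
        | exact dpp'
        | exact dqq'
        | exact dpq'
        | exact dp'q
        | exact dp'q'
        | exact (hsym _ _).mp dpq
        | exact (hsym _ _).mp dpp'
        | exact (hsym _ _).mp dqq'
        | exact (hsym _ _).mp dpq'
        | exact (hsym _ _).mp dp'q
        | exact (hsym _ _).mp dp'q'
  obtain ⟨b, hb⟩ := Option.isSome_iff_exists.mp dp'q'
  obtain ⟨c1, hc1, hc1'⟩ :=
    myMain hNR hRl hRr _ hS (Or.inl rfl) (Or.inr (Or.inl rfl))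
      (Or.inr (Or.inr (Or.inl rfl))) (Or.inr (Or.inr (Or.inr rfl)))
      hsp.1 hsq.1 hpq hb
  obtain ⟨c2, hc2, hc2'⟩ :=
    myMain hNR hRl hRr _ hS (Or.inr (Or.inr (Or.inl rfl))) (Or.inr (Or.inr (Or.inr rfl)))
      (Or.inl rfl) (Or.inr (Or.inl rfl))
      hsp.2 hsq.2 hb hpq
  refine ⟨b, hb, ?_, ?_⟩
  · exact IsProd.comp (IsProd.comp (IsProd.single a) (IsProd.single b) hc1)
      (IsProd.single a) hc1'
  · exact IsProd.comp (IsProd.comp (IsProd.single b) (IsProd.single a) hc2)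
      (IsProd.single b) hc2'
end
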